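/- A matroid A on K(V), |V| ≥ m+1, with hyperplane family H is an m-dimensional abstract rigidity matroid if and only if (H1) every hyperplane has at most m−1 vertices of valence |V|−1, and (H2) for all v ∈ V and A ⊆ V\{v} with |A| = m−1, the set Δ_v^A := K({v} ∪ A) ∪ K(V \ {v}) is a hyperplane. -/

import Mathlib

open Matroid Set

/-- A circuit of a matroid: a minimal dependent set. -/
def Matroid.IsCircuit' {α : Type*} (M : Matroid α) (C : Set α) : Prop :=
  M.Dep C ∧ ∀ D, D ⊂ C → M.Indep D

/-- A cocircuit: a circuit of the dual matroid. -/
def Matroid.IsCocircuit' {α : Type*} (M : Matroid α) (C : Set α) : Prop :=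
  M✶.IsCircuit' C

/-- A hyperplane: a maximal subset of the ground set not containing a basis. -/
def Matroid.IsHyperplane {α : Type*} (M : Matroid α) (H : Set α) : Prop :=
  H ⊆ M.E ∧ (¬ ∃ B ⊆ H, M.IsBase B) ∧
    ∀ H', H ⊂ H' → H' ⊆ M.E → ∃ B ⊆ H', M.IsBase B

/-- The rank of a set: the size of a largest independent subset. -/
noncomputable def Matroid.rk {α : Type*} (M : Matroid α) (X : Set α) : ℕ :=
  sSup {n | ∃ I ⊆ X, M.Indep I ∧ I.ncard = n}

/-- `cK U` is the edge set of the complete graph on the vertex set `U`. -/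
def cK {V : Type*} (U : Set V) : Set (Sym2 V) :=
  {e | ¬ e.IsDiag ∧ ∀ v ∈ e, v ∈ U}

/-- The support (set of endpoints) of an edge set. -/
def supp {V : Type*} (E : Set (Sym2 V)) : Set V := {v | ∃ e ∈ E, v ∈ e}

/-- An edge set is rigid if its closure is the complete graph on its support. -/
def Rigid {V : Type*} (A : Matroid (Sym2 V)) (E : Set (Sym2 V)) : Prop :=
  A.closure E = cK (supp E)

/-- `A` is an `m`-dimensional abstract rigidity matroid on `K(W)`. -/
def IsARMOn {V : Type*} (m : ℕ) (W : Set V) (A : Matroid (Sym2 V)) : Prop :=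
  A.E = cK W ∧
  (∀ E F : Set (Sym2 V), E ⊆ cK W → F ⊆ cK W →
    (supp E ∩ supp F).ncard < m →
    A.closure (E ∪ F) ⊆ cK (supp E) ∪ cK (supp F)) ∧
  (∀ E F : Set (Sym2 V), E ⊆ cK W → F ⊆ cK W →
    Rigid A E → Rigid A F → m ≤ (supp E ∩ supp F).ncard →
    Rigid A (E ∪ F))

/-- The star of a vertex: all edges containing it. -/
def starv {V : Type*} (v : V) : Set (Sym2 V) := {e | ¬ e.IsDiag ∧ v ∈ e}

/-- `C` is a vertex star minus `m-1` edges. -/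
def IsStarMinus {V : Type*} (m : ℕ) (C : Set (Sym2 V)) : Prop :=
  ∃ v : V, ∃ D ⊆ starv v, D.ncard = m - 1 ∧ C = starv v \ D

/-- The valence (degree) of a vertex in an edge set. -/
noncomputable def valence {V : Type*} (C : Set (Sym2 V)) (v : V) : ℕ :=
  {e ∈ C | v ∈ e}.ncard

/-- `bigstar V' = K(V) \ K(V \ V')`. -/
def bigstar {V : Type*} (V' : Set V) : Set (Sym2 V) :=
  cK (univ : Set V) \ cK (V'ᶜ)

/-- The family `H_m(V)` of unions of two complete graphs covering `V` and
meeting in `m-1` vertices. -/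
def HmFam (m : ℕ) (V : Type*) : Set (Set (Sym2 V)) :=
  {H | ∃ V₁ V₂ : Set V, V₁ ∪ V₂ = univ ∧ (V₁ ∩ V₂).ncard = m - 1 ∧
    ¬ V₁ ⊆ V₂ ∧ ¬ V₂ ⊆ V₁ ∧ H = cK V₁ ∪ cK V₂}

/-- The family `H_m^{(1)}(K(X))` of sets `Δ_v^A` relative to a vertex set `X`. -/
def Hm1Fam {V : Type*} (m : ℕ) (X : Set V) : Set (Set (Sym2 V)) :=
  {H | ∃ v ∈ X, ∃ A ⊆ X \ {v}, A.ncard = m - 1 ∧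
    H = cK ({v} ∪ A) ∪ cK (X \ {v})}

/-!
Both (H1) ∧ (H2) and the rigidity axioms are equivalent to two statements about complete graphs:
`K(U₁) ∪ K(U₂)` is closed when `|U₁ ∩ U₂| < m`, and spans `K(U₁ ∪ U₂)` when `|U₁ ∩ U₂| ≥ m`.
Given these, (H1) holds because the edges at any `m` vertices span, and each `Δ_v^S` is a closed
union of two complete graphs meeting in `m - 1` vertices, maximal because adding one edge at `v`
makes the overlap `m`.

Conversely, since each `Δ_v^S` is a flat, an edge `va` with `a ∉ S` is spanned by no subset of
`Δ_v^S`. This makes every `K(U)` closed, and makes the edges from a new vertex to at most `m`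
vertices of `U`, as well as the edges leaving `W` at `m` vertices of `W`, independent over
`K(U)`, resp. `K(W)`. As the edges at `m` vertices span, a rank count shows that the edges of
`K(W)` at any `m` of its vertices span `K(W)`; this gives gluing along `m` vertices and a rank
increase of exactly `m` per added vertex. Submodularity then shows that a union of two complete
graphs covering `V` and meeting in `m - 1` vertices is a non-spanning flat, and these flats
separate `K(U₁) ∪ K(U₂)` from each missing edge when `|U₁ ∩ U₂| < m`.
-/

def Delta {V : Type*} (v : V) (S : Set V) : Set (Sym2 V) := cK ({v} ∪ S) ∪ cK ({v}ᶜ)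

def fan {V : Type*} (v : V) (J : Set V) : Set (Sym2 V) := (fun u => s(v, u)) '' J

section CompleteGraphs

variable {V : Type*} {U U₁ U₂ I J S T W : Set V} {a b u v x y : V} {e : Sym2 V}

lemma mk_mem_cK : s(x, y) ∈ cK U ↔ x ≠ y ∧ x ∈ U ∧ y ∈ U := by
  simp [cK]

lemma mk_mem_bigstar : s(x, y) ∈ bigstar J ↔ x ≠ y ∧ (x ∈ J ∨ y ∈ J) := by
  simp [bigstar, cK]
  tauto

lemma mk_mem_starv : s(x, y) ∈ starv v ↔ x ≠ y ∧ (v = x ∨ v = y) := by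
  simp [starv]

lemma cK_mono (h : U₁ ⊆ U₂) : cK U₁ ⊆ cK U₂ :=
  fun _ he => ⟨he.1, fun v hv => h (he.2 v hv)⟩

lemma cK_inter : cK (U₁ ∩ U₂) = cK U₁ ∩ cK U₂ := by
  ext e
  simp only [cK, mem_ofPred_eq, mem_inter_iff]
  grind

lemma cK_empty : cK (∅ : Set V) = ∅ := by
  ext ⟨x, y⟩
  simp [mk_mem_cK]

lemma cK_union_subset : cK U₁ ∪ cK U₂ ⊆ cK (U₁ ∪ U₂) :=
  union_subset (cK_mono subset_union_left) (cK_mono subset_union_right)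

lemma cK_insert_subset_bigstar : cK (insert x J) ⊆ bigstar J := by
  rintro ⟨a, b⟩ h
  rw [mk_mem_cK] at h
  rw [mk_mem_bigstar]
  grind

lemma bigstar_subset_iff {H : Set (Sym2 V)} : bigstar J ⊆ H ↔ ∀ s ∈ J, starv s ⊆ H := by
  constructor
  · rintro h s hs ⟨a, b⟩ hab
    rw [mk_mem_starv] at hab
    apply h
    rw [mk_mem_bigstar]
    grind
  · rintro h ⟨a, b⟩ hab
    rw [mk_mem_bigstar] at hab
    obtain ⟨hne, ha | hb⟩ := hab
    · exact h a ha (mk_mem_starv.2 ⟨hne, Or.inl rfl⟩)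
    · exact h b hb (mk_mem_starv.2 ⟨hne, Or.inr rfl⟩)

lemma mk_notMem_Delta (h : u ∉ S) : s(v, u) ∉ Delta v S := by
  simp only [Delta, mem_union, mk_mem_cK]
  grind

lemma cK_subset_Delta (h : v ∉ U) : cK U ⊆ Delta v S :=
  (cK_mono fun _ hx (hxv : _ = v) => h (hxv ▸ hx)).trans subset_union_right

lemma fan_subset_Delta (h : v ∉ S) : fan v S ⊆ Delta v S := by
  rintro _ ⟨u, hu, rfl⟩
  exact Or.inl (mk_mem_cK.2 ⟨fun hvu => h (hvu ▸ hu), Or.inl rfl, Or.inr hu⟩)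

lemma mem_fan {e : Sym2 V} : e ∈ fan v J ↔ ∃ u ∈ J, s(v, u) = e := Iff.rfl

lemma fan_diff_singleton : fan v (J \ {u}) = fan v J \ {s(v, u)} := by
  rw [fan, image_sdiff (fun _ _ => Sym2.congr_right.1), image_singleton]; rfl

lemma encard_fan : (fan v J).encard = J.encard :=
  Function.Injective.encard_image (fun _ _ => Sym2.congr_right.1) J

lemma cK_insert (h : v ∉ U) : cK (insert v U) = cK U ∪ fan v U := by
  ext ⟨a, b⟩
  simp only [mem_union, mk_mem_cK, mem_insert_iff, fan, mem_image, Sym2.eq_iff]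
  grind

lemma cK_insert_inter_bigstar_subset (hJ : J ⊆ U) :
    cK (insert v U) ∩ bigstar J ⊆ cK U ∪ fan v J := by
  rintro ⟨a, b⟩ ⟨hK, hS⟩
  rw [mk_mem_cK] at hK
  rw [mk_mem_bigstar] at hS
  simp only [mem_union, mk_mem_cK, fan, mem_image, Sym2.eq_iff]
  grind

lemma exists_crossing_of_mem_cK_union (he : e ∈ cK (U₁ ∪ U₂))
    (h : e ∉ cK U₁ ∪ cK U₂) : ∃ x ∈ U₁ \ U₂, ∃ y ∈ U₂ \ U₁, e = s(x, y) := by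
  induction e with
  | h a b =>
  simp only [mem_union, mk_mem_cK] at he h
  by_cases ha : a ∈ U₁
  · exact ⟨a, ⟨ha, by grind⟩, b, by grind, rfl⟩
  · exact ⟨b, by grind, a, by grind, Sym2.eq_swap⟩

lemma Delta_mono (h : T ⊆ S) : Delta v T ⊆ Delta v S :=
  union_subset_union_left _ (cK_mono (union_subset_union_right _ h))

lemma bigstar_diff_subset_Delta (hb : b ∉ J) : bigstar J \ {s(b, a)} ⊆ Delta b (J \ {a}) := by
  rintro ⟨p, q⟩ ⟨hpq, hne⟩
  rw [mk_mem_bigstar] at hpq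
  simp only [mem_singleton_iff, Sym2.eq_iff] at hne
  simp only [Delta, mem_union, mk_mem_cK, mem_singleton_iff, mem_compl_iff, mem_sdiff]
  grind

lemma exists_eq_mk_of_mem_bigstar_diff_cK (hJW : J ⊆ W) (he : e ∈ bigstar J \ cK W) :
    ∃ a ∈ J, ∃ b ∉ W, e = s(b, a) := by
  induction e with
  | h p q =>
  obtain ⟨hpq, hne⟩ := he
  rw [mk_mem_bigstar] at hpq
  rw [mk_mem_cK] at hne
  obtain ⟨hpq, hp | hq⟩ := hpq
  · exact ⟨p, hp, q, fun hq => hne ⟨hpq, hJW hp, hq⟩, Sym2.eq_swap⟩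
  · exact ⟨q, hq, p, fun hp => hne ⟨hpq, hp, hJW hq⟩, rfl⟩

lemma exists_eq_mk_of_notMem_Delta (he : e ∈ cK univ) (h : e ∉ Delta v S) :
    ∃ b ∉ insert v S, e = s(v, b) := by
  induction e with
  | h p q =>
  simp only [Delta, mem_union, mk_mem_cK, mem_singleton_iff, mem_compl_iff, mem_univ,
    not_or] at he h
  by_cases hp : p = v
  · exact ⟨q, by grind, by rw [hp]⟩
  · exact ⟨p, by grind, by grind [Sym2.eq_swap]⟩

lemma cK_insert_insert_subset (hx : x ∈ U₁) (hy : y ∈ U₂) (hI : I ⊆ U₁ ∩ U₂) :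
    cK (insert y (insert x I)) ⊆ insert s(x, y) (cK U₁ ∪ cK U₂) := by
  rintro ⟨p, q⟩ h
  simp only [mk_mem_cK, mem_insert_iff] at h
  simp only [mem_insert_iff, mem_union, mk_mem_cK, Sym2.eq_iff]
  have := @hI p
  have := @hI q
  simp only [mem_inter_iff] at *
  grind

lemma cK_union_inter_bigstar_subset (hJ : J ⊆ U₁ ∩ U₂) :
    cK (U₁ ∪ U₂) ∩ bigstar J ⊆ cK U₁ ∪ cK U₂ := by
  rintro ⟨p, q⟩ ⟨hK, hJ'⟩
  rw [mk_mem_cK] at hK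
  rw [mk_mem_bigstar] at hJ'
  have := @hJ p
  have := @hJ q
  simp only [mem_union, mk_mem_cK, mem_inter_iff] at *
  grind

end CompleteGraphs

lemma exists_superset_ncard_eq_of_notMem {V : Type*} [Finite V] {T : Set V} {a b : V} {n : ℕ}
    (ha : a ∉ T) (hb : b ∉ T) (hT : T.ncard ≤ n) (hn : n + 2 ≤ Nat.card V) :
    ∃ S, T ⊆ S ∧ a ∉ S ∧ b ∉ S ∧ S.ncard = n := by
  have hTab : T ⊆ {a, b}ᶜ := by rintro x hx (rfl | rfl) <;> contradiction
  have hcard : n ≤ ({a, b}ᶜ : Set V).ncard := by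
    have := ncard_add_ncard_compl ({a, b} : Set V)
    have := ncard_insert_le a {b}
    rw [ncard_singleton] at this
    omega
  obtain ⟨S, hTS, hS, hSn⟩ := exists_superset_subset_encard_eq (k := n) hTab
    (by rw [← T.toFinite.cast_ncard_eq]; exact_mod_cast hT)
    (by rw [← Set.toFinite _ |>.cast_ncard_eq]; exact_mod_cast hcard)
  refine ⟨S, hTS, fun h => hS h (by simp), fun h => hS h (by simp), ?_⟩
  rw [← S.toFinite.cast_ncard_eq] at hSn
  exact_mod_cast hSn

section SupportsAndStars

variable {V : Type*} {U U₁ U₂ : Set V} {X Y H : Set (Sym2 V)}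

lemma supp_subset_of_subset_cK (h : X ⊆ cK U) : supp X ⊆ U :=
  fun _ ⟨_, he, hv⟩ => (h he).2 _ hv

lemma subset_cK_supp (h : X ⊆ cK univ) : X ⊆ cK (supp X) :=
  fun e he => ⟨(h he).1, fun _ hv => ⟨e, he, hv⟩⟩

lemma supp_cK (h : U.Nontrivial) : supp (cK U) = U := by
  refine (supp_subset_of_subset_cK subset_rfl).antisymm fun u hu => ?_
  obtain ⟨w, hw, hwu⟩ := h.exists_ne u
  exact ⟨s(u, w), mk_mem_cK.2 ⟨hwu.symm, hu, hw⟩, Sym2.mem_mk_left u w⟩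

lemma supp_union : supp (X ∪ Y) = supp X ∪ supp Y := by
  ext v
  simp only [supp, mem_union, mem_ofPred_eq]
  grind

lemma starv_eq_fan (v : V) : starv v = fan v {v}ᶜ := by
  ext ⟨a, b⟩
  rw [mk_mem_starv, mem_fan]
  constructor
  · rintro ⟨hab, rfl | rfl⟩
    · exact ⟨b, hab.symm, rfl⟩
    · exact ⟨a, hab, Sym2.eq_swap⟩
  · rintro ⟨u, hu, he⟩
    have hvu : s(v, u) ∈ starv v := mk_mem_starv.2 ⟨fun h => hu h.symm, Or.inl rfl⟩
    rwa [he, mk_mem_starv] at hvu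

lemma ncard_starv [Finite V] (v : V) : (starv v).ncard = Nat.card V - 1 := by
  rw [starv_eq_fan, fan, ncard_image_of_injective _ (fun _ _ => Sym2.congr_right.1),
    ncard_compl, ncard_singleton]

lemma starv_subset_iff_valence_eq [Finite V] (hH : H ⊆ cK univ) (v : V) :
    starv v ⊆ H ↔ valence H v = Nat.card V - 1 := by
  have hsub : {e ∈ H | v ∈ e} ⊆ starv v := fun e he => ⟨(hH he.1).1, he.2⟩
  rw [valence, ← ncard_starv v]
  refine ⟨fun h => congrArg ncard (hsub.antisymm fun e he => ⟨h he, he.2⟩), fun h => ?_⟩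
  rw [← eq_of_subset_of_ncard_le hsub h.ge]
  exact sep_subset _ _

end SupportsAndStars

namespace Matroid

variable {α : Type*} {M : Matroid α} {H X R D : Set α}

lemma isHyperplane_iff : M.IsHyperplane H ↔
    H ⊆ M.E ∧ ¬ M.Spanning H ∧ ∀ H', H ⊂ H' → H' ⊆ M.E → M.Spanning H' := by
  simp only [IsHyperplane, spanning_iff_exists_isBase_subset']
  grind

lemma IsHyperplane.isFlat (h : M.IsHyperplane H) : M.IsFlat H := by
  obtain ⟨hHE, hH, hmax⟩ := isHyperplane_iff.1 h
  refine isFlat_iff_closure_eq.2 ((M.subset_closure H).antisymm' fun e he => ?_)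
  by_contra heH
  have hspan := hmax _ (ssubset_insert heH) (insert_subset (mem_ground_of_mem_closure he) hHE)
  rw [spanning_iff_closure_eq, closure_insert_eq_of_mem_closure he,
    ← spanning_iff_closure_eq] at hspan
  exact hH hspan

lemma exists_isHyperplane_superset [Finite α] (hX : X ⊆ M.E) (hXs : ¬ M.Spanning X) :
    ∃ H, M.IsHyperplane H ∧ X ⊆ H := by
  obtain ⟨H, ⟨hXH, hHE, hH⟩, hmax⟩ := Set.Finite.exists_maximalFor id
    {Y | X ⊆ Y ∧ Y ⊆ M.E ∧ ¬ M.Spanning Y} (toFinite _) ⟨X, subset_rfl, hX, hXs⟩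
  refine ⟨H, isHyperplane_iff.2 ⟨hHE, hH, fun H' hHH' hH'E => ?_⟩, hXH⟩
  by_contra hH'
  exact hHH'.not_subset (hmax ⟨hXH.trans hHH'.subset, hH'E, hH'⟩ hHH'.subset)

/-- The hypothesis says that `D` is independent in the contraction `M ／ R`. -/
lemma eRk_union_eq_add_encard (hD : D.Finite) (hDE : D ⊆ M.E)
    (h : ∀ d ∈ D, d ∉ M.closure (R ∪ (D \ {d}))) : M.eRk (R ∪ D) = M.eRk R + D.encard := by
  induction D, hD using Set.Finite.induction_on with
  | empty => simp
  | @insert d D hdD hD ih =>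
    have hd : d ∉ M.closure (R ∪ D) := by simpa [hdD] using h d (mem_insert d D)
    rw [union_insert, eRk_insert_eq_add_one ⟨hDE (mem_insert d D), hd⟩,
      ih ((subset_insert d D).trans hDE) fun d' hd' hcl => h d' (mem_insert_of_mem d hd')
        (M.closure_subset_closure (union_subset_union_right R
          (sdiff_subset_sdiff_left (subset_insert d D))) hcl),
      encard_insert_of_notMem hdD, add_assoc]

end Matroid

section RigidityAxioms

variable {V : Type*} {m : ℕ} {A : Matroid (Sym2 V)} {U₁ U₂ S : Set V} {v : V}

/-- The rigidity axioms tested on complete graphs only; this suffices because every edge set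
`E` lies in `cK (supp E)`, which a rigid `E` spans. -/
def IsCliqueARM (m : ℕ) (A : Matroid (Sym2 V)) : Prop :=
  (∀ U₁ U₂ : Set V, (U₁ ∩ U₂).ncard < m → A.closure (cK U₁ ∪ cK U₂) ⊆ cK U₁ ∪ cK U₂) ∧
  ∀ U₁ U₂ : Set V, m ≤ (U₁ ∩ U₂).ncard → A.closure (cK U₁ ∪ cK U₂) = cK (U₁ ∪ U₂)

def BigstarSpanning (m : ℕ) (A : Matroid (Sym2 V)) : Prop :=
  ∀ J : Set V, J.ncard = m → A.Spanning (bigstar J)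

lemma cK_subset_ground (hE : A.E = cK univ) (U : Set V) : cK U ⊆ A.E :=
  hE ▸ cK_mono (subset_univ U)

lemma closure_cK_of_separation (hm : 0 < m) (hE : A.E = cK univ)
    (hsep : ∀ U₁ U₂ : Set V, (U₁ ∩ U₂).ncard < m → A.closure (cK U₁ ∪ cK U₂) ⊆ cK U₁ ∪ cK U₂)
    (U : Set V) : A.closure (cK U) = cK U := by
  have h := hsep U ∅ (by simpa using hm)
  rw [cK_empty, union_empty] at h
  exact h.antisymm (A.subset_closure _ (cK_subset_ground hE U))

lemma IsARMOn.closure_cK_union_subset [Finite V] (hA : IsARMOn m univ A)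
    (h : (U₁ ∩ U₂).ncard < m) : A.closure (cK U₁ ∪ cK U₂) ⊆ cK U₁ ∪ cK U₂ := by
  have hsupp : ∀ U : Set V, supp (cK U) ⊆ U := fun U => supp_subset_of_subset_cK subset_rfl
  refine (hA.2.1 _ _ (cK_mono (subset_univ _)) (cK_mono (subset_univ _))
    ((ncard_le_ncard (inter_subset_inter (hsupp U₁) (hsupp U₂))).trans_lt h)).trans ?_
  exact union_subset_union (cK_mono (hsupp U₁)) (cK_mono (hsupp U₂))

lemma IsARMOn.closure_cK_union_cK [Finite V] (hA : IsARMOn m univ A) (hm : 0 < m)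
    (h : m ≤ (U₁ ∩ U₂).ncard) : A.closure (cK U₁ ∪ cK U₂) = cK (U₁ ∪ U₂) := by
  have hflat := closure_cK_of_separation hm hA.1 fun _ _ => hA.closure_cK_union_subset
  obtain ⟨z, hz₁, hz₂⟩ : (U₁ ∩ U₂).Nonempty := nonempty_of_ncard_ne_zero (by omega)
  by_cases h₁₂ : U₁ ⊆ U₂
  · rw [union_eq_right.2 (cK_mono h₁₂), union_eq_right.2 h₁₂, hflat]
  by_cases h₂₁ : U₂ ⊆ U₁
  · rw [union_eq_left.2 (cK_mono h₂₁), union_eq_left.2 h₂₁, hflat]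
  obtain ⟨x₁, hx₁, hx₁'⟩ := not_subset.1 h₁₂
  obtain ⟨x₂, hx₂, hx₂'⟩ := not_subset.1 h₂₁
  have hU₁ : U₁.Nontrivial := ⟨x₁, hx₁, z, hz₁, fun h => hx₁' (h ▸ hz₂)⟩
  have hU₂ : U₂.Nontrivial := ⟨x₂, hx₂, z, hz₂, fun h => hx₂' (h ▸ hz₁)⟩
  have hrigid : ∀ U : Set V, U.Nontrivial → Rigid A (cK U) := fun U hU => by
    rw [Rigid, supp_cK hU, hflat]
  have h' := hA.2.2 _ _ (cK_mono (subset_univ _)) (cK_mono (subset_univ _)) (hrigid _ hU₁)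
    (hrigid _ hU₂) (by rwa [supp_cK hU₁, supp_cK hU₂])
  rwa [Rigid, supp_union, supp_cK hU₁, supp_cK hU₂] at h'

lemma isARMOn_univ_iff [Finite V] (hm : 0 < m) (hE : A.E = cK univ) :
    IsARMOn m univ A ↔ IsCliqueARM m A := by
  refine ⟨fun hA => ⟨fun _ _ => hA.closure_cK_union_subset,
    fun _ _ => hA.closure_cK_union_cK hm⟩, fun hA => ⟨hE, fun E F hE' hF' h => ?_,
    fun E F _ _ hErig hFrig h => ?_⟩⟩
  · exact (A.closure_subset_closure (union_subset_union (subset_cK_supp hE')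
      (subset_cK_supp hF'))).trans (hA.1 _ _ h)
  · rw [Rigid] at hErig hFrig ⊢
    rw [← closure_closure_union_closure_eq_closure_union, hErig, hFrig, hA.2 _ _ h, supp_union]

lemma IsCliqueARM.bigstarSpanning [Finite V] (hA : IsCliqueARM m A) (hE : A.E = cK univ) :
    BigstarSpanning m A := by
  intro J hJ
  have hJE : bigstar J ⊆ A.E := hE ▸ sdiff_subset
  rw [spanning_iff_ground_subset_closure hJE, hE]
  rintro ⟨x, y⟩ hxy
  by_cases hJ' : x ∈ J ∨ y ∈ J
  · exact A.subset_closure _ hJE (mk_mem_bigstar.2 ⟨(mk_mem_cK.1 hxy).1, hJ'⟩)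
  have hm : m ≤ (insert x J ∩ insert y J).ncard :=
    hJ ▸ ncard_le_ncard (subset_inter (subset_insert x J) (subset_insert y J))
  have hxy' : s(x, y) ∈ cK (insert x J ∪ insert y J) :=
    mk_mem_cK.2 ⟨(mk_mem_cK.1 hxy).1, Or.inl (mem_insert x J), Or.inr (mem_insert y J)⟩
  rw [← hA.2 _ _ hm] at hxy'
  exact A.closure_subset_closure (union_subset cK_insert_subset_bigstar
    cK_insert_subset_bigstar) hxy'

lemma IsCliqueARM.isHyperplane_Delta [Finite V] (hA : IsCliqueARM m A) (hm : 0 < m)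
    (hV : m + 1 ≤ Nat.card V) (hE : A.E = cK univ) (hvS : v ∉ S) (hS : S.ncard = m - 1) :
    A.IsHyperplane (Delta v S) := by
  have hΔE : Delta v S ⊆ A.E := union_subset (cK_subset_ground hE _) (cK_subset_ground hE _)
  have hΔ : A.closure (Delta v S) ⊆ Delta v S := hA.1 _ _ <| by
    refine lt_of_le_of_lt (ncard_le_ncard fun a ha => ?_) (hS ▸ Nat.sub_lt hm one_pos)
    exact ha.1.resolve_left ha.2
  refine isHyperplane_iff.2 ⟨hΔE, fun hsp => ?_, fun H' hH' hH'E => ?_⟩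
  · obtain ⟨w, hw⟩ : ∃ w, w ∉ insert v S := by
      by_contra! h
      have := ncard_insert_le v S
      rw [eq_univ_of_forall h, ncard_univ] at this
      omega
    have hvw : s(v, w) ∈ A.E :=
      hE ▸ mk_mem_cK.2 ⟨fun h => hw (h ▸ mem_insert v S), trivial, trivial⟩
    rw [← hsp.closure_eq] at hvw
    exact mk_notMem_Delta (fun h => hw (mem_insert_of_mem v h)) (hΔ hvw)
  obtain ⟨e, heH', heΔ⟩ := exists_of_ssubset hH'
  obtain ⟨b, hb, rfl⟩ := exists_eq_mk_of_notMem_Delta (hE ▸ hH'E heH') heΔ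
  have hbv : b ≠ v := fun h => hb (h ▸ mem_insert v S)
  have hbS : b ∉ S := fun h => hb (mem_insert_of_mem v h)
  have hm' : m ≤ (insert b (insert v S) ∩ {v}ᶜ).ncard := by
    have hsub : insert b S ⊆ insert b (insert v S) ∩ {v}ᶜ :=
      insert_subset ⟨mem_insert _ _, hbv⟩ fun s hs =>
        ⟨mem_insert_of_mem _ (mem_insert_of_mem _ hs), fun (h : s = v) => hvS (h ▸ hs)⟩
    have := ncard_le_ncard hsub
    rw [ncard_insert_of_notMem hbS, hS] at this
    omega
  have hU : insert b (insert v S) ∪ {v}ᶜ = univ := by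
    ext w
    by_cases hw : w = v <;> simp [hw]
  have hsub : cK (insert b (insert v S)) ∪ cK {v}ᶜ ⊆ H' :=
    union_subset ((cK_insert_insert_subset (U₁ := {v} ∪ S) (U₂ := {v}ᶜ) (Or.inl rfl) hbv
        fun s hs => ⟨Or.inr hs, fun (h : s = v) => hvS (h ▸ hs)⟩).trans
        (insert_subset heH' hH'.subset))
      (subset_union_right.trans hH'.subset)
  rw [spanning_iff_ground_subset_closure hH'E, hE, ← hU, ← hA.2 _ _ hm']
  exact A.closure_subset_closure hsub

end RigidityAxioms

lemma forall_isHyperplane_ncard_le_iff {V : Type*} [Finite V] {m : ℕ} {A : Matroid (Sym2 V)}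
    (hm : 0 < m) (hV : 2 ≤ Nat.card V) (hE : A.E = cK univ) :
    (∀ H, A.IsHyperplane H →
      {v | v ∈ supp H ∧ valence H v = Nat.card V - 1}.ncard ≤ m - 1) ↔ BigstarSpanning m A := by
  have hfull : ∀ {H}, A.IsHyperplane H → ∀ v, starv v ⊆ H ↔ valence H v = Nat.card V - 1 :=
    fun hH => starv_subset_iff_valence_eq (hE ▸ (isHyperplane_iff.1 hH).1)
  refine ⟨fun h J hJ => ?_, fun h H hH => ?_⟩
  · have hJE : bigstar J ⊆ A.E := hE ▸ sdiff_subset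
    by_contra hJs
    obtain ⟨H, hH, hJH⟩ := exists_isHyperplane_superset hJE hJs
    have : Nontrivial V := Finite.one_lt_card_iff_nontrivial.1 hV
    have hJsub : J ⊆ {v | v ∈ supp H ∧ valence H v = Nat.card V - 1} := fun s hs => by
      have hsH := bigstar_subset_iff.1 hJH s hs
      obtain ⟨t, hts⟩ := exists_ne s
      exact ⟨⟨s(s, t), hsH (mk_mem_starv.2 ⟨hts.symm, Or.inl rfl⟩), Sym2.mem_mk_left s t⟩,
        (hfull hH s).1 hsH⟩
    have := (ncard_le_ncard hJsub).trans (h H hH)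
    omega
  · by_contra! hlt
    obtain ⟨J, hJ, hJm⟩ := exists_subset_card_eq (Nat.le_of_pred_lt hlt)
    have hJH : bigstar J ⊆ H := bigstar_subset_iff.2 fun s hs => (hfull hH s).2 (hJ hs).2
    exact (isHyperplane_iff.1 hH).2.1 ((h J hJm).superset hJH (isHyperplane_iff.1 hH).1)

section DeltaFlat

variable {V : Type*} [Finite V] {m : ℕ} {A : Matroid (Sym2 V)} {U U₁ U₂ J T W : Set V}
  {u v : V} {H : Set (Sym2 V)}

def IsDeltaFlat (m : ℕ) (A : Matroid (Sym2 V)) : Prop :=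
  ∀ v S, v ∉ S → S.ncard = m - 1 → A.IsFlat (Delta v S)

namespace IsDeltaFlat

lemma mk_notMem_closure_Delta (hΔ : IsDeltaFlat m A) (hm : 0 < m) (hV : m + 1 ≤ Nat.card V)
    (hT : T.ncard ≤ m - 1) (hvT : v ∉ T) (huT : u ∉ T) :
    s(v, u) ∉ A.closure (Delta v T) := by
  obtain ⟨S, hTS, hvS, huS, hS⟩ := exists_superset_ncard_eq_of_notMem hvT huT hT (by omega)
  exact fun h => mk_notMem_Delta huS
    ((A.closure_subset_closure (Delta_mono hTS)).trans_eq (hΔ v S hvS hS).closure h)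

lemma isFlat_cK (hΔ : IsDeltaFlat m A) (hm : 0 < m) (hV : m + 1 ≤ Nat.card V)
    (hE : A.E = cK univ) (U : Set V) : A.IsFlat (cK U) := by
  refine isFlat_iff_closure_eq.2 ((A.subset_closure _ (cK_subset_ground hE U)).antisymm' ?_)
  have hout : ∀ {x y}, x ∉ U → s(x, y) ∉ A.closure (cK U) := fun hx h =>
    hΔ.mk_notMem_closure_Delta hm hV (T := ∅) (by simp) (notMem_empty _) (notMem_empty _)
      (A.closure_subset_closure (cK_subset_Delta hx) h)
  intro e hab
  induction e with | h a b =>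
  have hne : a ≠ b := (mk_mem_cK.1 (hE ▸ A.closure_subset_ground _ hab)).1
  by_contra h
  rw [mk_mem_cK] at h
  by_cases ha : a ∈ U
  · exact hout (fun hb => h ⟨hne, ha, hb⟩) (by rwa [Sym2.eq_swap] at hab)
  · exact hout ha hab

lemma cK_subset_closure_inter_bigstar (hΔ : IsDeltaFlat m A) (hm : 0 < m)
    (hV : m + 1 ≤ Nat.card V) (hE : A.E = cK univ) (hstars : BigstarSpanning m A)
    (hJW : J ⊆ W) (hJ : J.ncard = m) : cK W ⊆ A.closure (cK W ∩ bigstar J) := by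
  -- The edges `D` of `bigstar J` leaving `W` are independent over `cK W`, and adding them to
  -- `cK W ∩ bigstar J` gives the spanning set `bigstar J`; compare ranks.
  set D := bigstar J \ cK W
  have hD : ∀ d ∈ D, d ∉ A.closure (cK W ∪ (D \ {d})) := by
    intro d hd
    obtain ⟨a, ha, b, hb, rfl⟩ := exists_eq_mk_of_mem_bigstar_diff_cK hJW hd
    refine fun h => hΔ.mk_notMem_closure_Delta hm hV (T := J \ {a}) ?_
      (fun h => hb (hJW h.1)) (fun h => h.2 rfl) (A.closure_subset_closure ?_ h)
    · rw [ncard_sdiff_singleton_of_mem ha, hJ]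
    · exact union_subset (cK_subset_Delta hb) ((sdiff_subset_sdiff_left sdiff_subset).trans
        (bigstar_diff_subset_Delta fun h => hb (hJW h)))
  have hrk : A.eRk (cK W) ≤ A.eRk (cK W ∩ bigstar J) := by
    refine (ENat.add_le_add_iff_right (toFinite D).encard_lt_top.ne).1 ?_
    calc A.eRk (cK W) + D.encard
        = A.eRk (cK W ∪ D) := (A.eRk_union_eq_add_encard (toFinite D)
          (hE ▸ sdiff_subset.trans sdiff_subset) hD).symm
      _ ≤ A.eRank := A.eRk_le_eRank _
      _ = A.eRk (cK W ∩ bigstar J ∪ D) := by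
        rw [inter_comm, inter_union_sdiff, (hstars J hJ).eRk_eq]
      _ ≤ A.eRk (cK W ∩ bigstar J) + D.encard := A.eRk_union_le_eRk_add_encard _ _
  rw [(A.isRkFinite_set _).closure_eq_closure_of_subset_of_eRk_ge_eRk inter_subset_left hrk]
  exact A.subset_closure _ (cK_subset_ground hE W)

lemma closure_cK_union_cK (hΔ : IsDeltaFlat m A) (hm : 0 < m) (hV : m + 1 ≤ Nat.card V)
    (hE : A.E = cK univ) (hstars : BigstarSpanning m A) (h : m ≤ (U₁ ∩ U₂).ncard) :
    A.closure (cK U₁ ∪ cK U₂) = cK (U₁ ∪ U₂) := by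
  obtain ⟨J, hJ, hJm⟩ := exists_subset_card_eq h
  refine ((A.closure_subset_closure cK_union_subset).trans_eq
    (hΔ.isFlat_cK hm hV hE _).closure).antisymm ?_
  exact (hΔ.cK_subset_closure_inter_bigstar hm hV hE hstars
    (hJ.trans (inter_subset_left.trans subset_union_left)) hJm).trans
    (A.closure_subset_closure (cK_union_inter_bigstar_subset hJ))

lemma eRk_cK_union_fan (hΔ : IsDeltaFlat m A) (hm : 0 < m) (hV : m + 1 ≤ Nat.card V)
    (hE : A.E = cK univ) (hvU : v ∉ U) (hvJ : v ∉ J) (hJ : J.ncard ≤ m) :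
    A.eRk (cK U ∪ fan v J) = A.eRk (cK U) + J.encard := by
  rw [← encard_fan (v := v)]
  refine A.eRk_union_eq_add_encard (toFinite _) (hE ▸ ?_) ?_
  · rintro _ ⟨s, hs, rfl⟩
    exact mk_mem_cK.2 ⟨fun h => hvJ (h ▸ hs), trivial, trivial⟩
  rintro _ ⟨s, hs, rfl⟩ h
  rw [← fan_diff_singleton] at h
  exact hΔ.mk_notMem_closure_Delta hm hV (T := J \ {s})
    (by rw [ncard_sdiff_singleton_of_mem hs]; omega) (fun h => hvJ h.1) (fun h => h.2 rfl)
    (A.closure_subset_closure (union_subset (cK_subset_Delta hvU)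
      (fan_subset_Delta fun h => hvJ h.1)) h)

lemma eRk_cK_insert (hΔ : IsDeltaFlat m A) (hm : 0 < m) (hV : m + 1 ≤ Nat.card V)
    (hE : A.E = cK univ) (hstars : BigstarSpanning m A) (hv : v ∉ U) (hU : m ≤ U.ncard) :
    A.eRk (cK (insert v U)) = A.eRk (cK U) + m := by
  obtain ⟨J, hJU, hJ⟩ := exists_subset_card_eq hU
  have hspan : cK (insert v U) ⊆ A.closure (cK U ∪ fan v J) :=
    (hΔ.cK_subset_closure_inter_bigstar hm hV hE hstars (hJU.trans (subset_insert v U))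
      hJ).trans (A.closure_subset_closure (cK_insert_inter_bigstar_subset hJU))
  have hsub : cK U ∪ fan v J ⊆ cK (insert v U) :=
    cK_insert hv ▸ union_subset_union_right _ (image_mono hJU)
  rw [← (A.eRk_mono hsub).antisymm ((A.eRk_mono hspan).trans_eq (A.eRk_closure_eq _)),
    hΔ.eRk_cK_union_fan hm hV hE hv (fun h => hv (hJU h)) hJ.le, ← hJ,
    (toFinite J).cast_ncard_eq]

lemma eRk_cK_union_of_disjoint (hΔ : IsDeltaFlat m A) (hm : 0 < m) (hV : m + 1 ≤ Nat.card V)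
    (hE : A.E = cK univ) (hstars : BigstarSpanning m A) (hW : m ≤ W.ncard)
    (hWT : Disjoint W T) : A.eRk (cK (W ∪ T)) = A.eRk (cK W) + m * T.encard := by
  have hT := toFinite T
  induction T, hT using Set.Finite.induction_on with
  | empty => simp
  | @insert a T haT hT ih =>
    have haWT : a ∉ W ∪ T := fun h => h.elim (disjoint_insert_right.1 hWT).1 haT
    rw [union_insert, hΔ.eRk_cK_insert hm hV hE hstars haWT
      (hW.trans (ncard_le_ncard subset_union_left)), ih (hWT.mono_right (subset_insert a T)),
      encard_insert_of_notMem haT]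
    ring

lemma not_spanning_of_mem_HmFam (hΔ : IsDeltaFlat m A) (hm : 0 < m) (hV : m + 1 ≤ Nat.card V)
    (hE : A.E = cK univ) (hstars : BigstarSpanning m A) (hH : H ∈ HmFam m V) :
    ¬ A.Spanning H := by
  obtain ⟨V₁, V₂, hu, hI, h₁₂, h₂₁, rfl⟩ := hH
  obtain ⟨x, hx₁, hx₂⟩ := not_subset.1 h₁₂
  obtain ⟨y, hy₂, hy₁⟩ := not_subset.1 h₂₁
  set I := V₁ ∩ V₂
  set T := (V₂ \ V₁) \ {y}
  have hxI : x ∉ I := fun h => hx₂ h.2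
  have hyI : y ∉ I := fun h => hy₁ h.1
  have hV₁ : m ≤ V₁.ncard := by
    have := ncard_le_ncard (insert_subset hx₁ inter_subset_left : insert x I ⊆ V₁)
    rw [ncard_insert_of_notMem hxI, hI] at this
    omega
  have hrk_univ : A.eRank = A.eRk (cK V₁) + m * (T.encard + 1) := by
    rw [← eRk_ground, hE, encard_sdiff_singleton_add_one (show y ∈ V₂ \ V₁ from ⟨hy₂, hy₁⟩),
      ← hΔ.eRk_cK_union_of_disjoint hm hV hE hstars hV₁ disjoint_sdiff_right, union_sdiff_self,
      hu]
  have hrk_V₂ : A.eRk (cK V₂) = A.eRk (cK I) + I.encard + m * T.encard := by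
    have hV₂ : insert y I ∪ T = V₂ := by
      ext z
      simp only [I, T, mem_union, mem_insert_iff, mem_inter_iff, mem_sdiff, mem_singleton_iff]
      grind
    have hdisj : Disjoint (insert y I) T := by
      rw [disjoint_iff_forall_ne]
      rintro a ha _ ⟨⟨-, hb⟩, hby⟩ rfl
      exact ha.elim hby (fun h => hb h.1)
    rw [← hV₂, hΔ.eRk_cK_union_of_disjoint hm hV hE hstars
      (by rw [ncard_insert_of_notMem hyI, hI]; omega) hdisj, cK_insert hyI,
      hΔ.eRk_cK_union_fan hm hV hE hyI hyI (by omega)]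
  -- Each vertex of `V₂ \ V₁` adds `m` to the rank when joined to `V₁`, but `y` adds only
  -- `m - 1` when joined to `I`, so submodularity leaves `cK V₁ ∪ cK V₂` one short of full rank.
  intro hsp
  have hsub := A.eRk_inter_add_eRk_union_le (cK V₁) (cK V₂)
  rw [← cK_inter, hsp.eRk_eq, hrk_univ, hrk_V₂, ← (toFinite I).cast_ncard_eq, hI,
    ← (toFinite T).cast_ncard_eq] at hsub
  obtain ⟨a, ha⟩ := ENat.ne_top_iff_exists.1 (A.isRkFinite_set (cK V₁)).eRk_lt_top.ne
  obtain ⟨b, hb⟩ := ENat.ne_top_iff_exists.1 (A.isRkFinite_set (cK I)).eRk_lt_top.ne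
  rw [← ha, ← hb] at hsub
  norm_cast at hsub
  rw [mul_add, mul_one] at hsub
  omega

lemma isFlat_of_mem_HmFam (hΔ : IsDeltaFlat m A) (hm : 0 < m) (hV : m + 1 ≤ Nat.card V)
    (hE : A.E = cK univ) (hstars : BigstarSpanning m A) (hH : H ∈ HmFam m V) : A.IsFlat H := by
  obtain ⟨V₁, V₂, hu, hI, -, -, rfl⟩ := id hH
  have hHE : cK V₁ ∪ cK V₂ ⊆ A.E :=
    union_subset (cK_subset_ground hE _) (cK_subset_ground hE _)
  refine isFlat_iff_closure_eq.2 ((A.subset_closure _ hHE).antisymm' fun e he => ?_)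
  by_contra heH
  obtain ⟨x, ⟨hx₁, hx₂⟩, y, ⟨hy₂, hy₁⟩, rfl⟩ :=
    exists_crossing_of_mem_cK_union (hu ▸ hE ▸ A.closure_subset_ground _ he) heH
  set I := V₁ ∩ V₂
  have hxI : x ∉ I := fun h => hx₂ h.2
  have hyI : y ∉ I := fun h => hy₁ h.1
  have hglue : ∀ {U₁ U₂ : Set V}, m ≤ (U₁ ∩ U₂).ncard →
      cK U₁ ∪ cK U₂ ⊆ A.closure (cK V₁ ∪ cK V₂) →
      cK (U₁ ∪ U₂) ⊆ A.closure (cK V₁ ∪ cK V₂) := fun h hU =>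
    (hΔ.closure_cK_union_cK hm hV hE hstars h).symm.trans_subset
      (closure_subset_closure_of_subset_closure hU)
  have hxyI : cK (insert y (insert x I)) ⊆ A.closure (cK V₁ ∪ cK V₂) :=
    (cK_insert_insert_subset hx₁ hy₂ subset_rfl).trans
      (insert_subset he (A.subset_closure _ hHE))
  have hyV₁ : cK (V₁ ∪ insert y (insert x I)) ⊆ A.closure (cK V₁ ∪ cK V₂) := by
    refine hglue ?_ (union_subset (subset_union_left.trans (A.subset_closure _ hHE)) hxyI)
    have := ncard_le_ncard (subset_inter (insert_subset hx₁ inter_subset_left)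
      (subset_insert y (insert x I)) : insert x I ⊆ V₁ ∩ _)
    rw [ncard_insert_of_notMem hxI, hI] at this
    omega
  have huniv : cK ((V₁ ∪ insert y (insert x I)) ∪ V₂) ⊆ A.closure (cK V₁ ∪ cK V₂) := by
    refine hglue ?_ (union_subset hyV₁ (subset_union_right.trans (A.subset_closure _ hHE)))
    have := ncard_le_ncard (subset_inter
      ((insert_subset_insert (subset_insert x I)).trans subset_union_right)
      (insert_subset hy₂ inter_subset_right) : insert y I ⊆ (V₁ ∪ _) ∩ V₂)
    rw [ncard_insert_of_notMem hyI, hI] at this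
    omega
  rw [union_right_comm, hu, univ_union, ← hE] at huniv
  exact hΔ.not_spanning_of_mem_HmFam hm hV hE hstars hH
    ((spanning_iff_ground_subset_closure hHE).2 huniv)

lemma closure_cK_union_subset (hΔ : IsDeltaFlat m A) (hm : 0 < m) (hV : m + 1 ≤ Nat.card V)
    (hE : A.E = cK univ) (hstars : BigstarSpanning m A) (h : (U₁ ∩ U₂).ncard < m) :
    A.closure (cK U₁ ∪ cK U₂) ⊆ cK U₁ ∪ cK U₂ := by
  intro e he
  by_contra heU
  obtain ⟨x, ⟨hx₁, hx₂⟩, y, ⟨hy₂, hy₁⟩, rfl⟩ := exists_crossing_of_mem_cK_union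
    ((A.closure_subset_closure cK_union_subset).trans_eq (hΔ.isFlat_cK hm hV hE _).closure he)
    heU
  obtain ⟨I, hI, hxI, hyI, hIm⟩ := exists_superset_ncard_eq_of_notMem (n := m - 1)
    (T := U₁ ∩ U₂) (fun h => hx₂ h.2) (fun h => hy₁ h.1) (by omega) (by omega)
  set V₂ := U₂ ∪ I
  set V₁ := V₂ᶜ ∪ I
  have hxV₂ : x ∉ V₂ := fun h => h.elim hx₂ hxI
  have hyV₁ : y ∉ V₁ := fun h => h.elim (· (Or.inl hy₂)) hyI
  have hH : cK V₁ ∪ cK V₂ ∈ HmFam m V := by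
    have hV₁₂ : V₁ ∩ V₂ = I := by
      ext z
      simp only [V₁, V₂, mem_inter_iff, mem_union, mem_compl_iff]
      tauto
    refine ⟨V₁, V₂, ?_, hV₁₂ ▸ hIm, fun h => hxV₂ (h (Or.inl hxV₂)),
      fun h => hyV₁ (h (Or.inl hy₂)), rfl⟩
    ext z
    simp only [V₁, V₂, mem_union, mem_compl_iff, mem_univ, iff_true]
    tauto
  have hU₁ : U₁ ⊆ V₁ := fun a ha => by
    by_cases haI : a ∈ I
    · exact Or.inr haI
    · exact Or.inl fun h => h.elim (fun ha₂ => haI (hI ⟨ha, ha₂⟩)) haI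
  have hxy := (hΔ.isFlat_of_mem_HmFam hm hV hE hstars hH).closure ▸
    A.closure_subset_closure (union_subset_union (cK_mono hU₁) (cK_mono subset_union_left)) he
  exact hxy.elim (fun h => hyV₁ (mk_mem_cK.1 h).2.2) (fun h => hxV₂ (mk_mem_cK.1 h).2.1)

end IsDeltaFlat

lemma isCliqueARM_of_isDeltaFlat (hm : 0 < m) (hV : m + 1 ≤ Nat.card V) (hE : A.E = cK univ)
    (hΔ : IsDeltaFlat m A) (hstars : BigstarSpanning m A) : IsCliqueARM m A :=
  ⟨fun _ _ => hΔ.closure_cK_union_subset hm hV hE hstars,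
    fun _ _ => hΔ.closure_cK_union_cK hm hV hE hstars⟩

end DeltaFlat

theorem stmt_12_general {V : Type*} [Fintype V] (m : ℕ) (hm : 0 < m)
    (hV : m + 1 ≤ Fintype.card V)
    (A : Matroid (Sym2 V)) (hE : A.E = cK (univ : Set V)) :
    IsARMOn m (univ : Set V) A ↔
      ((∀ H, A.IsHyperplane H →
          {v | v ∈ supp H ∧ valence H v = Fintype.card V - 1}.ncard ≤ m - 1) ∧
       (∀ (v : V) (S : Set V), v ∉ S → S.ncard = m - 1 →
          A.IsHyperplane (cK ({v} ∪ S) ∪ cK ({v}ᶜ)))) := by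
  rw [← Nat.card_eq_fintype_card] at hV ⊢
  rw [isARMOn_univ_iff hm hE, forall_isHyperplane_ncard_le_iff hm (by omega) hE]
  refine ⟨fun hA => ⟨hA.bigstarSpanning hE, fun v S hvS hS => ?_⟩, fun ⟨hstars, hΔ⟩ => ?_⟩
  · exact hA.isHyperplane_Delta hm hV hE hvS hS
  · exact isCliqueARM_of_isDeltaFlat hm hV hE (fun v S hvS hS => (hΔ v S hvS hS).isFlat)
      hstars

theorem stmt_12 {V : Type*} [Fintype V] [DecidableEq V] (m : ℕ) (hm : 0 < m)
    (hV : m + 1 ≤ Fintype.card V)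
    (A : Matroid (Sym2 V)) (hE : A.E = cK (univ : Set V)) :
    IsARMOn m (univ : Set V) A ↔
      ((∀ H, A.IsHyperplane H →
          {v | v ∈ supp H ∧ valence H v = Fintype.card V - 1}.ncard ≤ m - 1) ∧
       (∀ (v : V) (S : Set V), v ∉ S → S.ncard = m - 1 →
          A.IsHyperplane (cK ({v} ∪ S) ∪ cK ({v}ᶜ)))) :=
  stmt_12_general m hm hV A hE
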